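/- The inequalities 0 ≤ G_PPI(X;Y) ≤ G_PNI(X→Y) ≤ G_NNI(X;Y) ≤ min{ H(X|Y), H(Y|X) } hold. -/

import Mathlib

open scoped BigOperators Pointwise Classical

noncomputable section

namespace GW

/-- A probability mass function on a finite type. -/
def IsPMF {α : Type} [Fintype α] (p : α → ℝ) : Prop :=
  (∀ a, 0 ≤ p a) ∧ ∑ a, p a = 1

/-- Distribution (pmf) of the random variable `f` under the pmf `p`. -/
def dist {α β : Type} [Fintype α] (p : α → ℝ) (f : α → β) : β → ℝ :=
  fun b => ∑ a, if f a = b then p a else 0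

/-- Shannon entropy (base 2) of the random variable `f` under the pmf `p`. -/
def H {α β : Type} [Fintype α] [Fintype β] (p : α → ℝ) (f : α → β) : ℝ :=
  ∑ b, -(dist p f b * Real.logb 2 (dist p f b))

/-- Mutual information `I(f; g)` under `p`. -/
def I2 {α β γ : Type} [Fintype α] [Fintype β] [Fintype γ]
    (p : α → ℝ) (f : α → β) (g : α → γ) : ℝ :=
  H p f + H p g - H p (fun a => (f a, g a))

/-- Conditional entropy `H(f | g)` under `p`. -/
def Hc {α β γ : Type} [Fintype α] [Fintype β] [Fintype γ]
    (p : α → ℝ) (f : α → β) (g : α → γ) : ℝ :=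
  H p (fun a => (f a, g a)) - H p g

/-- Conditional mutual information `I(f; g | h)` under `p`. -/
def Ic {α β γ δ : Type} [Fintype α] [Fintype β] [Fintype γ] [Fintype δ]
    (p : α → ℝ) (f : α → β) (g : α → γ) (h : α → δ) : ℝ :=
  Hc p f h + Hc p g h - Hc p (fun a => (f a, g a)) h

/-- Independence of the random variables `f` and `g` under `p`. -/
def Indep {α β γ : Type} [Fintype α] (p : α → ℝ) (f : α → β) (g : α → γ) : Prop :=
  ∀ b c, dist p (fun a => (f a, g a)) (b, c) = dist p f b * dist p g c

/-- `q` is a joint pmf on `X × Y × U` whose `(X,Y)`-marginal is `p`; i.e. `U` is an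
auxiliary random variable defined jointly with `(X,Y)` via a conditional pmf `p_{U|XY}`. -/
def IsAux {X Y U : Type} [Fintype X] [Fintype Y] [Fintype U]
    (p : X × Y → ℝ) (q : X × Y × U → ℝ) : Prop :=
  IsPMF q ∧ ∀ x y, (∑ u, q (x, y, u)) = p (x, y)

/-- Coordinate map onto `X`. -/
def cX {X Y U : Type} : X × Y × U → X := fun a => a.1
/-- Coordinate map onto `Y`. -/
def cY {X Y U : Type} : X × Y × U → Y := fun a => a.2.1
/-- Coordinate map onto `U`. -/
def cU {X Y U : Type} : X × Y × U → U := fun a => a.2.2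
/-- Coordinate map onto `X × Y`. -/
def cXY {X Y U : Type} : X × Y × U → X × Y := fun a => (a.1, a.2.1)

/-- The mutual information region `𝓘_{XY}`. -/
def MIRegion {X Y : Type} [Fintype X] [Fintype Y] (p : X × Y → ℝ) : Set (ℝ × ℝ × ℝ) :=
  { v | ∃ (U : Type) (_ : Fintype U) (q : X × Y × U → ℝ), IsAux p q ∧
      v = (I2 q cX cU, I2 q cY cU, I2 q cXY cU) }

/-- The outer region `𝓘ᵒ_{XY}`. -/
def OuterRegion {X Y : Type} [Fintype X] [Fintype Y] (p : X × Y → ℝ) : Set (ℝ × ℝ × ℝ) :=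
  { v | 0 ≤ v.1 ∧ 0 ≤ v.2.1 ∧ v.1 + v.2.1 - v.2.2 ≤ I2 p Prod.fst Prod.snd ∧
        0 ≤ v.2.2 - v.2.1 ∧ v.2.2 - v.2.1 ≤ Hc p Prod.fst Prod.snd ∧
        0 ≤ v.2.2 - v.1 ∧ v.2.2 - v.1 ≤ Hc p Prod.snd Prod.fst }

/-- Maximal interaction information `G_NNI(X; Y)`. -/
def GNNI {X Y : Type} [Fintype X] [Fintype Y] (p : X × Y → ℝ) : ℝ :=
  sSup { r | ∃ (U : Type) (_ : Fintype U) (q : X × Y × U → ℝ), IsAux p q ∧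
      r = Ic q cX cY cU - I2 p Prod.fst Prod.snd }

/-- Asymmetric private interaction information `G_PNI(X → Y)`. -/
def GPNI {X Y : Type} [Fintype X] [Fintype Y] (p : X × Y → ℝ) : ℝ :=
  sSup { r | ∃ (U : Type) (_ : Fintype U) (q : X × Y × U → ℝ), IsAux p q ∧
      Indep q cU cX ∧ r = Ic q cX cY cU - I2 p Prod.fst Prod.snd }

/-- Symmetric private interaction information `G_PPI(X; Y)`. -/
def GPPI {X Y : Type} [Fintype X] [Fintype Y] (p : X × Y → ℝ) : ℝ :=
  sSup { r | ∃ (U : Type) (_ : Fintype U) (q : X × Y × U → ℝ), IsAux p q ∧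
      Indep q cU cX ∧ Indep q cU cY ∧ r = Ic q cX cY cU - I2 p Prod.fst Prod.snd }


section Lemmas

variable {α β γ : Type} [Fintype α] [Fintype β] [Fintype γ]

def phi (t : ℝ) : ℝ := -(t * Real.logb 2 t)

lemma H_eq_phi (p : α → ℝ) (f : α → β) : H p f = ∑ b, phi (dist p f b) := rfl

lemma dist_nonneg' {p : α → ℝ} (hp : ∀ a, 0 ≤ p a) (f : α → β) (b : β) :
    0 ≤ dist p f b :=
  Finset.sum_nonneg fun a _ => by by_cases h : f a = b <;> simp [h, hp a]

lemma sum_dist (p : α → ℝ) (f : α → β) : ∑ b, dist p f b = ∑ a, p a := by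
  unfold dist
  rw [Finset.sum_comm]
  exact Finset.sum_congr rfl fun a _ => by simp

lemma dist_comp (p : α → ℝ) (f : α → β) (g : β → γ) (c : γ) :
    dist p (fun a => g (f a)) c = ∑ b, if g b = c then dist p f b else 0 := by
  unfold dist
  have h : ∀ b : β, (if g b = c then (∑ a, if f a = b then p a else 0) else 0)
      = ∑ a, (if f a = b then (if g b = c then p a else 0) else 0) := by
    intro b
    split <;> simp
  rw [Finset.sum_congr rfl fun b _ => h b, Finset.sum_comm]
  refine Finset.sum_congr rfl fun a _ => ?_
  simp

lemma phi_add_le {s t : ℝ} (hs : 0 ≤ s) (ht : 0 ≤ t) : phi (s + t) ≤ phi s + phi t := by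
  unfold phi
  have h1 : s * Real.logb 2 s ≤ s * Real.logb 2 (s + t) := by
    rcases hs.eq_or_lt with h | h
    · simp [← h]
    · exact mul_le_mul_of_nonneg_left
        (Real.logb_le_logb_of_le one_lt_two h (by linarith)) hs
  have h2 : t * Real.logb 2 t ≤ t * Real.logb 2 (s + t) := by
    rcases ht.eq_or_lt with h | h
    · simp [← h]
    · exact mul_le_mul_of_nonneg_left
        (Real.logb_le_logb_of_le one_lt_two h (by linarith)) ht
  have h3 : (s + t) * Real.logb 2 (s + t)
      = s * Real.logb 2 (s + t) + t * Real.logb 2 (s + t) := add_mul _ _ _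
  linarith

lemma phi_sum_le {d : β → ℝ} (hd : ∀ b, 0 ≤ d b) (s : Finset β) :
    phi (∑ b ∈ s, d b) ≤ ∑ b ∈ s, phi (d b) := by
  classical
  induction s using Finset.induction_on with
  | empty => simp [phi]
  | @insert a t hnot ih =>
      rw [Finset.sum_insert hnot, Finset.sum_insert hnot]
      have h1 : phi (d a + ∑ b ∈ t, d b) ≤ phi (d a) + phi (∑ b ∈ t, d b) :=
        phi_add_le (hd a) (Finset.sum_nonneg fun b _ => hd b)
      linarith

lemma H_comp_le {p : α → ℝ} (hp : ∀ a, 0 ≤ p a) (f : α → β) (g : β → γ) :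
    H p (fun a => g (f a)) ≤ H p f := by
  rw [H_eq_phi, H_eq_phi,
    ← Finset.sum_fiberwise Finset.univ g (fun b => phi (dist p f b))]
  refine Finset.sum_le_sum fun c _ => ?_
  rw [dist_comp, ← Finset.sum_filter]
  exact phi_sum_le (dist_nonneg' hp f) _

lemma H_comp_inj (p : α → ℝ) (f : α → β) (h : β → γ) (hh : Function.Injective h) :
    H p (fun a => h (f a)) = H p f := by
  rw [H_eq_phi, H_eq_phi]
  refine (Fintype.sum_of_injective h hh (fun b => phi (dist p f b))
    (fun c => phi (dist p (fun a => h (f a)) c)) ?_ ?_).symm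
  · intro c hc
    have : dist p (fun a => h (f a)) c = 0 := by
      unfold dist
      refine Finset.sum_eq_zero fun a _ => ?_
      have : h (f a) ≠ c := fun he => hc ⟨f a, he⟩
      simp [this]
    simp [this, phi]
  · intro b
    have : dist p (fun a => h (f a)) (h b) = dist p f b := by
      unfold dist
      exact Finset.sum_congr rfl fun a _ => by simp [hh.eq_iff]
    show phi (dist p f b) = phi (dist p (fun a => h (f a)) (h b))
    rw [this]

lemma H_pair_le {p : α → ℝ} (hp : IsPMF p) (f : α → β) (g : α → γ) :
    H p (fun a => (f a, g a)) ≤ H p f + H p g := by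
  classical
  set d : β × γ → ℝ := dist p (fun a => (f a, g a)) with hd
  have hd0 : ∀ bc, 0 ≤ d bc := dist_nonneg' hp.1 _
  have hmargb : ∀ b, dist p f b = ∑ c, d (b, c) := by
    intro b
    have h1 : dist p f b = dist p (fun a => Prod.fst ((f a, g a) : β × γ)) b := rfl
    rw [h1, dist_comp p (fun a => (f a, g a)) Prod.fst b, Fintype.sum_prod_type,
      Finset.sum_comm]
    exact Finset.sum_congr rfl fun c _ => by simp; rfl
  have hmargc : ∀ c, dist p g c = ∑ b, d (b, c) := by
    intro c
    have h1 : dist p g c = dist p (fun a => Prod.snd ((f a, g a) : β × γ)) c := rfl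
    rw [h1, dist_comp p (fun a => (f a, g a)) Prod.snd c, Fintype.sum_prod_type]
    exact Finset.sum_congr rfl fun b _ => by simp; rfl
  have hsum : ∑ b, ∑ c, d (b, c) = 1 := by
    rw [← Fintype.sum_prod_type, hd, sum_dist]; exact hp.2
  have hsumb : ∑ b, dist p f b = 1 := by rw [sum_dist]; exact hp.2
  have hsumc : ∑ c, dist p g c = 1 := by rw [sum_dist]; exact hp.2
  have eH1 : H p f = -∑ b, ∑ c, d (b, c) * Real.logb 2 (dist p f b) := by
    rw [H_eq_phi, ← Finset.sum_neg_distrib]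
    refine Finset.sum_congr rfl fun b _ => ?_
    show -(dist p f b * Real.logb 2 (dist p f b))
      = -(∑ c, d (b, c) * Real.logb 2 (dist p f b))
    set L := Real.logb 2 (dist p f b) with hL
    rw [hmargb b, Finset.sum_mul]
  have eH2 : H p g = -∑ b, ∑ c, d (b, c) * Real.logb 2 (dist p g c) := by
    have hcomm : ∑ b : β, ∑ c : γ, d (b, c) * Real.logb 2 (dist p g c)
        = ∑ c : γ, ∑ b : β, d (b, c) * Real.logb 2 (dist p g c) := Finset.sum_comm
    rw [hcomm, H_eq_phi, ← Finset.sum_neg_distrib]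
    refine Finset.sum_congr rfl fun c _ => ?_
    show -(dist p g c * Real.logb 2 (dist p g c))
      = -(∑ b, d (b, c) * Real.logb 2 (dist p g c))
    set L := Real.logb 2 (dist p g c) with hL
    rw [hmargc c, Finset.sum_mul]
  have eH3 : H p (fun a => (f a, g a)) = -∑ b, ∑ c, d (b, c) * Real.logb 2 (d (b, c)) := by
    rw [H_eq_phi, ← hd, Fintype.sum_prod_type, ← Finset.sum_neg_distrib]
    exact Finset.sum_congr rfl fun b _ => by rw [← Finset.sum_neg_distrib]; rfl
  have hlog2 : (0:ℝ) < Real.log 2 := Real.log_pos one_lt_two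
  have key : ∀ b c, d (b, c) * Real.logb 2 (dist p f b) + d (b, c) * Real.logb 2 (dist p g c)
      - d (b, c) * Real.logb 2 (d (b, c))
      ≤ (dist p f b * dist p g c - d (b, c)) / Real.log 2 := by
    intro b c
    rcases (hd0 (b, c)).eq_or_lt with h | h
    · rw [← h]
      simp only [zero_mul, add_zero, sub_zero, zero_add, sub_zero]
      exact div_nonneg (mul_nonneg (dist_nonneg' hp.1 f b) (dist_nonneg' hp.1 g c)) hlog2.le
    · have hb : 0 < dist p f b := by
        rw [hmargb b]
        exact lt_of_lt_of_le h (Finset.single_le_sum (fun c' _ => hd0 (b, c')) (Finset.mem_univ c))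
      have hc : 0 < dist p g c := by
        rw [hmargc c]
        exact lt_of_lt_of_le h (Finset.single_le_sum (fun b' _ => hd0 (b', c)) (Finset.mem_univ b))
      have ht : 0 < dist p f b * dist p g c / d (b, c) := by positivity
      have hlog : Real.log (dist p f b * dist p g c / d (b, c))
          ≤ dist p f b * dist p g c / d (b, c) - 1 := Real.log_le_sub_one_of_pos ht
      have e : Real.logb 2 (dist p f b) + Real.logb 2 (dist p g c) - Real.logb 2 (d (b, c))
          = Real.log (dist p f b * dist p g c / d (b, c)) / Real.log 2 := by
        rw [← Real.log_div_log, ← Real.log_div_log, ← Real.log_div_log,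
          Real.log_div (by positivity) h.ne', Real.log_mul hb.ne' hc.ne']
        ring
      have step1 : d (b, c) * Real.logb 2 (dist p f b) + d (b, c) * Real.logb 2 (dist p g c)
          - d (b, c) * Real.logb 2 (d (b, c))
          = d (b, c) * (Real.log (dist p f b * dist p g c / d (b, c)) / Real.log 2) := by
        rw [← e]; ring
      have step2 : d (b, c) * (Real.log (dist p f b * dist p g c / d (b, c)) / Real.log 2)
          ≤ d (b, c) * ((dist p f b * dist p g c / d (b, c) - 1) / Real.log 2) := by
        gcongr
      have step3 : d (b, c) * ((dist p f b * dist p g c / d (b, c) - 1) / Real.log 2)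
          = (dist p f b * dist p g c - d (b, c)) / Real.log 2 := by
        field_simp
      rw [step1, ← step3]
      exact step2
  have sumkey : ∑ b, ∑ c, (d (b, c) * Real.logb 2 (dist p f b)
        + d (b, c) * Real.logb 2 (dist p g c) - d (b, c) * Real.logb 2 (d (b, c)))
      ≤ ∑ b, ∑ c, (dist p f b * dist p g c - d (b, c)) / Real.log 2 :=
    Finset.sum_le_sum fun b _ => Finset.sum_le_sum fun c _ => key b c
  have sumzero : ∑ b, ∑ c, (dist p f b * dist p g c - d (b, c)) / Real.log 2 = 0 := by
    have h1 : ∑ b, ∑ c, dist p f b * dist p g c = 1 := by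
      rw [← Finset.sum_mul_sum, hsumb, hsumc, one_mul]
    simp only [sub_div, Finset.sum_sub_distrib, ← Finset.sum_div, h1, hsum, sub_self]
  have expand : ∑ b, ∑ c, (d (b, c) * Real.logb 2 (dist p f b)
        + d (b, c) * Real.logb 2 (dist p g c) - d (b, c) * Real.logb 2 (d (b, c)))
      = (∑ b, ∑ c, d (b, c) * Real.logb 2 (dist p f b))
        + (∑ b, ∑ c, d (b, c) * Real.logb 2 (dist p g c))
        - (∑ b, ∑ c, d (b, c) * Real.logb 2 (d (b, c))) := by
    simp [Finset.sum_add_distrib, Finset.sum_sub_distrib]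
  rw [eH1, eH2, eH3]
  linarith [sumkey, sumzero, expand.symm.trans_le sumkey]



end Lemmas

section AuxLemmas

variable {X Y U : Type} [Fintype X] [Fintype Y] [Fintype U]
variable {p : X × Y → ℝ} {q : X × Y × U → ℝ}

lemma H_congr_dist {α α' β : Type} [Fintype α] [Fintype α'] [Fintype β]
    {p : α → ℝ} {p' : α' → ℝ} {f : α → β} {f' : α' → β}
    (h : dist p f = dist p' f') : H p f = H p' f' := by
  unfold H
  rw [h]

lemma sum_triple (f : X × Y × U → ℝ) :
    ∑ a : X × Y × U, f a = ∑ x, ∑ y, ∑ u, f (x, y, u) := by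
  rw [Fintype.sum_prod_type]
  exact Finset.sum_congr rfl fun x _ => Fintype.sum_prod_type _

lemma dist_cX_eq (haux : IsAux p q) :
    dist q (cX : X × Y × U → X) = dist p Prod.fst := by
  funext x
  show (∑ a : X × Y × U, if a.1 = x then q a else 0)
    = ∑ a : X × Y, if a.1 = x then p a else 0
  rw [sum_triple, Fintype.sum_prod_type]
  refine Finset.sum_congr rfl fun x' _ => Finset.sum_congr rfl fun y' _ => ?_
  by_cases h : x' = x
  · subst h
    simp only [if_pos rfl]
    exact haux.2 x' y'
  · simp [h]

lemma dist_cY_eq (haux : IsAux p q) :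
    dist q (cY : X × Y × U → Y) = dist p Prod.snd := by
  funext y
  show (∑ a : X × Y × U, if a.2.1 = y then q a else 0)
    = ∑ a : X × Y, if a.2 = y then p a else 0
  rw [sum_triple, Fintype.sum_prod_type]
  refine Finset.sum_congr rfl fun x' _ => Finset.sum_congr rfl fun y' _ => ?_
  by_cases h : y' = y
  · subst h
    simp only [if_pos rfl]
    exact haux.2 x' y'
  · simp [h]

lemma dist_cXY_eq (haux : IsAux p q) :
    dist q (cXY : X × Y × U → X × Y) = dist p (fun b => b) := by
  funext b
  obtain ⟨x, y⟩ := b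
  unfold dist cXY
  rw [sum_triple, Fintype.sum_prod_type]
  refine Finset.sum_congr rfl fun x' _ => Finset.sum_congr rfl fun y' _ => ?_
  by_cases h : (x', y') = (x, y)
  · injection h with h1 h2
    subst h1; subst h2
    simp only [eq_self_iff_true, if_true]
    exact haux.2 x' y'
  · simp [h]

lemma Ic_eq (q : X × Y × U → ℝ) :
    Ic q cX cY cU
      = H q (fun a => (cX a, cU a)) + H q (fun a => (cY a, cU a))
        - H q (fun a => a) - H q cU := by
  have e1 : H q (fun a : X × Y × U => ((cX a, cY a), cU a)) = H q (fun a => a) :=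
    H_comp_inj q (fun a => a) (fun a : X × Y × U => ((a.1, a.2.1), a.2.2))
      (fun a b h => by
        simp only [Prod.mk.injEq] at h
        exact Prod.ext h.1.1 (Prod.ext h.1.2 h.2))
  have h3 : Hc q (fun a : X × Y × U => (cX a, cY a)) cU
      = H q (fun a => a) - H q cU := by
    show H q (fun a => ((cX a, cY a), cU a)) - H q cU = _
    rw [e1]
  show Hc q cX cU + Hc q cY cU - Hc q (fun a => (cX a, cY a)) cU = _
  rw [h3]
  unfold Hc
  ring

lemma key_bound (hp : IsPMF p) (haux : IsAux p q) :
    Ic q cX cY cU - I2 p Prod.fst Prod.snd ≤ Hc p Prod.fst Prod.snd := by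
  have hq : IsPMF q := haux.1
  have hXU_le : H q (fun a : X × Y × U => (cX a, cU a)) ≤ H q cX + H q cU :=
    H_pair_le hq cX cU
  have hYU_le : H q (fun a : X × Y × U => (cY a, cU a)) ≤ H q (fun a => a) :=
    H_comp_le hq.1 (fun a : X × Y × U => a) (fun a : X × Y × U => (a.2.1, a.2.2))
  have hHX : H q (cX : X × Y × U → X) = H p Prod.fst := H_congr_dist (dist_cX_eq haux)
  rw [Ic_eq]
  unfold I2 Hc
  linarith

lemma key_bound' (hp : IsPMF p) (haux : IsAux p q) :
    Ic q cX cY cU - I2 p Prod.fst Prod.snd ≤ Hc p Prod.snd Prod.fst := by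
  have hq : IsPMF q := haux.1
  have hYU_le : H q (fun a : X × Y × U => (cY a, cU a)) ≤ H q cY + H q cU :=
    H_pair_le hq cY cU
  have hXU_le : H q (fun a : X × Y × U => (cX a, cU a)) ≤ H q (fun a => a) :=
    H_comp_le hq.1 (fun a : X × Y × U => a) (fun a : X × Y × U => (a.1, a.2.2))
  have hHY : H q (cY : X × Y × U → Y) = H p Prod.snd := H_congr_dist (dist_cY_eq haux)
  have hswap : H p (fun a : X × Y => (Prod.snd a, Prod.fst a))
      = H p (fun a : X × Y => (Prod.fst a, Prod.snd a)) :=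
    H_comp_inj p (fun a : X × Y => a) Prod.swap Prod.swap_injective
  rw [Ic_eq]
  unfold I2 Hc
  linarith

lemma zero_mem (hp : IsPMF p) :
    (0 : ℝ) ∈ {r : ℝ | ∃ (U : Type) (_ : Fintype U) (q : X × Y × U → ℝ), IsAux p q ∧
      Indep q cU cX ∧ Indep q cU cY ∧ r = Ic q cX cY cU - I2 p Prod.fst Prod.snd} := by
  classical
  set q : X × Y × Unit → ℝ := fun a => p (a.1, a.2.1) with hqdef
  have hsum : ∑ a : X × Y × Unit, q a = 1 := by
    rw [sum_triple]
    calc ∑ x, ∑ y, ∑ _u : Unit, q (x, y, _u)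
        = ∑ x, ∑ y, p (x, y) :=
          Finset.sum_congr rfl fun x _ => Finset.sum_congr rfl fun y _ => by simp [hqdef]
      _ = 1 := by rw [← Fintype.sum_prod_type]; exact hp.2
  have haux : IsAux p q := ⟨⟨fun a => hp.1 _, hsum⟩, fun x y => by simp [hqdef]⟩
  have hdU : ∀ u : Unit, dist q cU u = 1 := by
    intro u
    unfold dist cU
    rw [← hsum]
    exact Finset.sum_congr rfl fun a _ => by simp
  have hIX : Indep q cU cX := by
    intro u x
    rw [hdU u, one_mul]
    unfold dist cU cX
    refine Finset.sum_congr rfl fun a _ => ?_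
    simp [Prod.ext_iff, eq_iff_true_of_subsingleton]
  have hIY : Indep q cU cY := by
    intro u y
    rw [hdU u, one_mul]
    unfold dist cU cY
    refine Finset.sum_congr rfl fun a _ => ?_
    simp [Prod.ext_iff, eq_iff_true_of_subsingleton]
  have hU0 : H q cU = 0 := by
    rw [H_eq_phi]
    simp [hdU, phi]
  have hXU : H q (fun a : X × Y × Unit => (cX a, cU a)) = H q cX :=
    H_comp_inj q cX (fun x : X => (x, ())) (fun a b h => congrArg Prod.fst h)
  have hYU : H q (fun a : X × Y × Unit => (cY a, cU a)) = H q cY :=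
    H_comp_inj q cY (fun y : Y => (y, ())) (fun a b h => congrArg Prod.fst h)
  have hfull : H q (fun a : X × Y × Unit => a) = H q cXY :=
    H_comp_inj q cXY (fun b : X × Y => (b.1, b.2, ())) (fun a b h => by
      injection h with h1 h2
      injection h2 with h3 _
      exact Prod.ext h1 h3)
  have hHX : H q (cX : X × Y × Unit → X) = H p Prod.fst := H_congr_dist (dist_cX_eq haux)
  have hHY : H q (cY : X × Y × Unit → Y) = H p Prod.snd := H_congr_dist (dist_cY_eq haux)
  have hHXY : H q (cXY : X × Y × Unit → X × Y)
      = H p (fun a : X × Y => (Prod.fst a, Prod.snd a)) := H_congr_dist (dist_cXY_eq haux)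
  refine ⟨Unit, inferInstance, q, haux, hIX, hIY, ?_⟩
  rw [Ic_eq]
  unfold I2
  linarith

end AuxLemmas

/-- `0 ≤ G_PPI(X;Y) ≤ G_PNI(X→Y) ≤ G_NNI(X;Y) ≤ min{H(X|Y), H(Y|X)}`. -/
theorem stmt9 {X Y : Type} [Fintype X] [Fintype Y] (p : X × Y → ℝ) (hp : IsPMF p) :
    0 ≤ GPPI p ∧ GPPI p ≤ GPNI p ∧ GPNI p ≤ GNNI p ∧
      GNNI p ≤ min (Hc p Prod.fst Prod.snd) (Hc p Prod.snd Prod.fst) := by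
  classical
  have h0 : (0 : ℝ) ∈ {r : ℝ | ∃ (U : Type) (_ : Fintype U) (q : X × Y × U → ℝ), IsAux p q ∧
      Indep q cU cX ∧ Indep q cU cY ∧ r = Ic q cX cY cU - I2 p Prod.fst Prod.snd} :=
    zero_mem hp
  have hub : ∀ r ∈ {r : ℝ | ∃ (U : Type) (_ : Fintype U) (q : X × Y × U → ℝ), IsAux p q ∧
      r = Ic q cX cY cU - I2 p Prod.fst Prod.snd},
      r ≤ min (Hc p Prod.fst Prod.snd) (Hc p Prod.snd Prod.fst) := by
    rintro r ⟨U, hU, q, haux, rfl⟩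
    exact le_min (key_bound hp haux) (key_bound' hp haux)
  have hsub1 : {r : ℝ | ∃ (U : Type) (_ : Fintype U) (q : X × Y × U → ℝ), IsAux p q ∧
        Indep q cU cX ∧ Indep q cU cY ∧ r = Ic q cX cY cU - I2 p Prod.fst Prod.snd}
      ⊆ {r : ℝ | ∃ (U : Type) (_ : Fintype U) (q : X × Y × U → ℝ), IsAux p q ∧
        Indep q cU cX ∧ r = Ic q cX cY cU - I2 p Prod.fst Prod.snd} := by
    rintro r ⟨U, hU, q, h1, h2, _h3, h4⟩
    exact ⟨U, hU, q, h1, h2, h4⟩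
  have hsub2 : {r : ℝ | ∃ (U : Type) (_ : Fintype U) (q : X × Y × U → ℝ), IsAux p q ∧
        Indep q cU cX ∧ r = Ic q cX cY cU - I2 p Prod.fst Prod.snd}
      ⊆ {r : ℝ | ∃ (U : Type) (_ : Fintype U) (q : X × Y × U → ℝ), IsAux p q ∧
        r = Ic q cX cY cU - I2 p Prod.fst Prod.snd} := by
    rintro r ⟨U, hU, q, h1, _h2, h4⟩
    exact ⟨U, hU, q, h1, h4⟩
  have hbdd : BddAbove {r : ℝ | ∃ (U : Type) (_ : Fintype U) (q : X × Y × U → ℝ), IsAux p q ∧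
      r = Ic q cX cY cU - I2 p Prod.fst Prod.snd} :=
    ⟨min (Hc p Prod.fst Prod.snd) (Hc p Prod.snd Prod.fst), fun r hr => hub r hr⟩
  have h0N : (0 : ℝ) ∈ {r : ℝ | ∃ (U : Type) (_ : Fintype U) (q : X × Y × U → ℝ), IsAux p q ∧
      r = Ic q cX cY cU - I2 p Prod.fst Prod.snd} := hsub2 (hsub1 h0)
  refine ⟨?_, ?_, ?_, ?_⟩
  · exact le_csSup (BddAbove.mono (hsub1.trans hsub2) hbdd) h0
  · exact csSup_le_csSup (BddAbove.mono hsub2 hbdd) ⟨0, h0⟩ hsub1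
  · exact csSup_le_csSup hbdd ⟨0, hsub1 h0⟩ hsub2
  · exact csSup_le ⟨0, h0N⟩ hub

end GW
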